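/- Let β ∈ (0,1] and let p be a real number with 1 ≤ p < ∞. There exists a constant C > 0, depending only on β and p, such that for every R > 0 and every function f : [0,1] → ℝ belonging to the Hölder ball C^β(R), with f not identically zero, one has ‖f‖_∞ ≤ C · ‖f‖_p · max(1, R/‖f‖_p)^{(1/p)/(β + 1/p)}. -/

import Mathlib

/-!
Let `M = |f x₀|` be the maximum of `|f|` on `[0, 1]`. The Hölder bound keeps `|f| ≥ M / 2` within
distance `δ = (M / 2R) ^ (1/β)` of `x₀`, so `[0, 1]` contains an interval of length `min δ 1` on
which `|f| ^ p ≥ (M / 2) ^ p`, and `min δ 1 * (M / 2) ^ p ≤ ‖f‖_p ^ p`. If `δ ≥ 1` this is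
`M ≤ 2 ‖f‖_p`. Otherwise it reads `(M / 2) ^ (1 + pβ) ≤ R ‖f‖_p ^ (pβ)`, that is
`M / 2 ≤ ‖f‖_p (R / ‖f‖_p) ^ θ` with `θ = 1 / (1 + pβ) = (1/p) / (β + 1/p)`.
-/

open MeasureTheory Set Filter Topology

lemma continuousOn_of_dist_le_mul_rpow {X Y : Type*} [PseudoMetricSpace X] [PseudoMetricSpace Y]
    {f : X → Y} {s : Set X} {R β : ℝ} (hβ : 0 < β)
    (hf : ∀ x ∈ s, ∀ y ∈ s, dist (f x) (f y) ≤ R * dist x y ^ β) : ContinuousOn f s := by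
  intro x hx
  have hlim : Tendsto (fun y => R * dist y x ^ β) (𝓝[s] x) (𝓝 0) := by
    have : ContinuousAt (fun y => R * dist y x ^ β) x := by
      fun_prop (disch := exact Or.inr hβ.le)
    simpa [Real.zero_rpow hβ.ne'] using this.tendsto.mono_left nhdsWithin_le_nhds
  exact tendsto_iff_dist_tendsto_zero.2 <| squeeze_zero' (.of_forall fun _ => dist_nonneg)
    (eventually_nhdsWithin_of_forall fun y hy => hf y hy x hx) hlim

lemma exists_Icc_subset_inter_closedBall {u v x₀ t : ℝ} (hx₀ : x₀ ∈ Icc u v) (ht : t ≤ v - u) :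
    ∃ a, Icc a (a + t) ⊆ Icc u v ∩ Metric.closedBall x₀ t := by
  refine ⟨min x₀ (v - t), fun x hx => ?_⟩
  have ht₀ : 0 ≤ t := by linarith [hx.1, hx.2]
  have hu : u ≤ min x₀ (v - t) := le_min hx₀.1 (by linarith)
  have hx₀t : x₀ - t ≤ min x₀ (v - t) := le_min (by linarith) (by linarith [hx₀.2])
  rw [Real.closedBall_eq_Icc]
  exact ⟨⟨by linarith [hx.1], by linarith [hx.2, min_le_right x₀ (v - t)]⟩,
    by linarith [hx.1], by linarith [hx.2, min_le_left x₀ (v - t)]⟩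

section HolderUnitInterval

variable {f : ℝ → ℝ} {R β : ℝ}

lemma half_abs_le_abs_of_abs_sub_le_mul_rpow {s : Set ℝ} (hR : 0 < R) (hβ : 0 < β)
    (hf : ∀ x ∈ s, ∀ y ∈ s, |f x - f y| ≤ R * |x - y| ^ β) {x₀ x : ℝ}
    (hx₀ : x₀ ∈ s) (hx : x ∈ s) (hxx₀ : |x₀ - x| ≤ (|f x₀| / 2 / R) ^ β⁻¹) :
    |f x₀| / 2 ≤ |f x| := by
  have hdist : R * |x₀ - x| ^ β ≤ |f x₀| / 2 :=
    calc R * |x₀ - x| ^ β ≤ R * ((|f x₀| / 2 / R) ^ β⁻¹) ^ β := by gcongr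
      _ = |f x₀| / 2 := by rw [Real.rpow_inv_rpow (by positivity) hβ.ne']; field_simp
  linarith [abs_sub_abs_le_abs_sub (f x₀) (f x), hf x₀ hx₀ x hx]

lemma min_rpow_mul_rpow_le_integral_rpow_abs {p : ℝ} (hR : 0 < R) (hβ : 0 < β) (hp : 0 ≤ p)
    (hf : ∀ x ∈ Icc (0 : ℝ) 1, ∀ y ∈ Icc (0 : ℝ) 1, |f x - f y| ≤ R * |x - y| ^ β)
    {x₀ : ℝ} (hx₀ : x₀ ∈ Icc (0 : ℝ) 1) :
    min ((|f x₀| / 2 / R) ^ β⁻¹) 1 * (|f x₀| / 2) ^ p ≤ ∫ x in Icc (0 : ℝ) 1, |f x| ^ p := by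
  set t := min ((|f x₀| / 2 / R) ^ β⁻¹) 1
  obtain ⟨a, ha⟩ := exists_Icc_subset_inter_closedBall hx₀ (show t ≤ 1 - 0 by simp [t])
  have hJ : Icc a (a + t) ⊆ Icc 0 1 := ha.trans inter_subset_left
  have hint : IntegrableOn (fun x => |f x| ^ p) (Icc 0 1) :=
    ((continuousOn_of_dist_le_mul_rpow hβ (by simpa only [Real.dist_eq] using hf)).abs.rpow_const
      fun _ _ => Or.inr hp).integrableOn_Icc
  have hlow : ∀ x ∈ Icc a (a + t), (|f x₀| / 2) ^ p ≤ |f x| ^ p := by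
    intro x hx
    obtain ⟨hx01, hxx₀⟩ := ha hx
    rw [Metric.mem_closedBall, Real.dist_eq, abs_sub_comm] at hxx₀
    gcongr
    exact half_abs_le_abs_of_abs_sub_le_mul_rpow hR hβ hf hx₀ hx01 (hxx₀.trans (min_le_left _ _))
  calc t * (|f x₀| / 2) ^ p = (|f x₀| / 2) ^ p * volume.real (Icc a (a + t)) := by
        rw [Real.volume_real_Icc_of_le (by simp only [le_add_iff_nonneg_right, t]; positivity)]
        ring
    _ ≤ ∫ x in Icc a (a + t), |f x| ^ p :=
        setIntegral_ge_of_const_le_real measurableSet_Icc measure_Icc_lt_top.ne hlow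
          (hint.mono_set hJ)
    _ ≤ ∫ x in Icc 0 1, |f x| ^ p :=
        setIntegral_mono_set hint (.of_forall fun _ => by positivity) hJ.eventuallyLE

end HolderUnitInterval

section Interpolation

variable {β p m N R : ℝ}

lemma le_mul_div_rpow_of_rpow_mul_rpow_le (hβ : 0 < β) (hp : 0 < p) (hm : 0 < m)
    (hN : 0 < N) (hR : 0 < R) (h : (m / R) ^ β⁻¹ * m ^ p ≤ N ^ p) :
    m ≤ N * (R / N) ^ ((1 / p) / (β + 1 / p)) := by
  set θ := (1 / p) / (β + 1 / p)
  set k := 1 + p * β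
  have hk : 0 < k := by positivity
  have hθk : θ * k = 1 := by simp only [θ, k]; field_simp; ring
  have hmk : m ^ k ≤ R * N ^ (p * β) := by
    have := Real.rpow_le_rpow (by positivity) h hβ.le
    rw [Real.mul_rpow (by positivity) (by positivity), Real.rpow_inv_rpow (by positivity) hβ.ne',
      ← Real.rpow_mul hm.le, ← Real.rpow_mul hN.le, div_mul_eq_mul_div, div_le_iff₀ hR] at this
    rw [Real.rpow_add hm, Real.rpow_one]
    linarith
  have hRHS : (N * (R / N) ^ θ) ^ k = R * N ^ (p * β) := by
    rw [Real.mul_rpow hN.le (by positivity), ← Real.rpow_mul (by positivity), hθk, Real.rpow_one,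
      Real.rpow_add hN, Real.rpow_one]
    field_simp
  rw [← Real.rpow_le_rpow_iff hm.le (by positivity) hk, hRHS]
  exact hmk

lemma le_mul_max_rpow_of_min_rpow_mul_rpow_le (hβ : 0 < β) (hp : 0 < p) (hm : 0 < m)
    (hN : 0 ≤ N) (hR : 0 < R) (h : min ((m / R) ^ β⁻¹) 1 * m ^ p ≤ N ^ p) :
    m ≤ N * max 1 (R / N) ^ ((1 / p) / (β + 1 / p)) := by
  rcases le_total 1 ((m / R) ^ β⁻¹) with hδ | hδ
  · rw [min_eq_right hδ, one_mul, Real.rpow_le_rpow_iff hm.le hN hp] at h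
    exact h.trans (le_mul_of_one_le_right hN (Real.one_le_rpow (le_max_left _ _) (by positivity)))
  · rw [min_eq_left hδ] at h
    have hN₀ : 0 < N := by
      refine hN.lt_of_ne fun hN₀ => ?_
      rw [← hN₀, Real.zero_rpow hp.ne'] at h
      exact (by positivity : 0 < (m / R) ^ β⁻¹ * m ^ p).not_ge h
    calc m ≤ N * (R / N) ^ ((1 / p) / (β + 1 / p)) :=
          le_mul_div_rpow_of_rpow_mul_rpow_le hβ hp hm hN₀ hR h
      _ ≤ N * max 1 (R / N) ^ ((1 / p) / (β + 1 / p)) := by gcongr; exact le_max_right _ _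

end Interpolation

theorem sup_norm_le_lp_holder_general (β p : ℝ) (hβ0 : 0 < β) (hp : 1 ≤ p) :
    ∃ C : ℝ, 0 < C ∧ ∀ R : ℝ, 0 < R → ∀ f : ℝ → ℝ,
      (∀ x ∈ Set.Icc (0:ℝ) 1, ∀ y ∈ Set.Icc (0:ℝ) 1, |f x - f y| ≤ R * |x - y| ^ β) →
      (∃ x ∈ Set.Icc (0:ℝ) 1, f x ≠ 0) →
      (⨆ x : Set.Icc (0:ℝ) 1, |f x|) ≤
        C * (∫ x in Set.Icc (0:ℝ) 1, |f x| ^ p) ^ (1/p) *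
          (max 1 (R / (∫ x in Set.Icc (0:ℝ) 1, |f x| ^ p) ^ (1/p)))
            ^ ((1/p) / (β + 1/p)) := by
  have hp₀ : 0 < p := by linarith
  refine ⟨2, two_pos, fun R hR f hf hne => ?_⟩
  have hcont : ContinuousOn f (Icc 0 1) :=
    continuousOn_of_dist_le_mul_rpow hβ0 (by simpa only [Real.dist_eq] using hf)
  obtain ⟨x₀, hx₀, hmax⟩ := isCompact_Icc.exists_isMaxOn (nonempty_Icc.2 zero_le_one) hcont.abs
  have hM : 0 < |f x₀| / 2 := by
    obtain ⟨x, hx, hfx⟩ := hne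
    linarith [abs_pos.2 hfx, show |f x| ≤ |f x₀| from hmax hx]
  set N := (∫ x in Icc (0:ℝ) 1, |f x| ^ p) ^ (1 / p)
  have hNp : N ^ p = ∫ x in Icc (0:ℝ) 1, |f x| ^ p := by
    simp only [N, one_div]
    exact Real.rpow_inv_rpow (setIntegral_nonneg measurableSet_Icc fun _ _ => by positivity) hp₀.ne'
  have hkey := min_rpow_mul_rpow_le_integral_rpow_abs hR hβ0 hp₀.le hf hx₀
  rw [← hNp] at hkey
  calc (⨆ x : Icc (0:ℝ) 1, |f x|) ≤ |f x₀| := ciSup_le fun x => hmax x.2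
    _ = 2 * (|f x₀| / 2) := by ring
    _ ≤ 2 * (N * max 1 (R / N) ^ ((1 / p) / (β + 1 / p))) := by
        gcongr
        exact le_mul_max_rpow_of_min_rpow_mul_rpow_le hβ0 hp₀ hM (by positivity) hR hkey
    _ = _ := by ring

/-- Sup-norm bound via the L^p norm on Hölder balls. -/
theorem sup_norm_le_lp_holder (β p : ℝ) (hβ0 : 0 < β) (hβ1 : β ≤ 1) (hp : 1 ≤ p) :
    ∃ C : ℝ, 0 < C ∧ ∀ R : ℝ, 0 < R → ∀ f : ℝ → ℝ,
      (∀ x ∈ Set.Icc (0:ℝ) 1, ∀ y ∈ Set.Icc (0:ℝ) 1, |f x - f y| ≤ R * |x - y| ^ β) →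
      (∃ x ∈ Set.Icc (0:ℝ) 1, f x ≠ 0) →
      (⨆ x : Set.Icc (0:ℝ) 1, |f x|) ≤
        C * (∫ x in Set.Icc (0:ℝ) 1, |f x| ^ p) ^ (1/p) *
          (max 1 (R / (∫ x in Set.Icc (0:ℝ) 1, |f x| ^ p) ^ (1/p)))
            ^ ((1/p) / (β + 1/p)) :=
  sup_norm_le_lp_holder_general β p hβ0 hp
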